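/- arXiv:0912.2823 — 2 statements merged into one kernel-verified Lean document; each statement's English description precedes it below -/
import Mathlib

section
/- Let T, S be closed densely defined operators with S∘T = 0 on Hilbert spaces, let □ = T T* + S* S be the associated self-adjoint Laplacian with bounded inverse G on the orthogonal complement of its kernel, extended by 0 on the kernel. If φ satisfies Sφ = 0 and φ ⊥ ker □ (= ker S ∩ ker T*), then φ = T T* G φ; that is, S*S G φ = 0 and u = T* G φ solves T u = φ. -/
open scoped InnerProductSpace

/-! For `φ` with `S φ = 0` and `φ ⊥ ker □`, the Green identity writes `φ = T T* G φ + S* S G φ`.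
The first summand lies in `range T ⊆ ker S`, so `S* S G φ = φ - T T* G φ` lies in `ker S`;
but it also lies in `range S*`, which is orthogonal to `ker S`. Hence it vanishes. -/

namespace LinearPMap

variable {𝕜 E F : Type*} [RCLike 𝕜]
  [NormedAddCommGroup E] [InnerProductSpace 𝕜 E] [CompleteSpace E]
  [NormedAddCommGroup F] [InnerProductSpace 𝕜 F]
  {S : E →ₗ.[𝕜] F}

theorem inner_adjoint_apply_eq_zero_of_apply_eq_zero (hS : Dense (S.domain : Set E))
    (y : S†.domain) {x : S.domain} (hx : S x = 0) : ⟪S† y, (x : E)⟫_𝕜 = 0 := by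
  rw [adjoint_isFormalAdjoint hS y x, hx, inner_zero_right]

theorem adjoint_apply_eq_zero_of_add_eq (hS : Dense (S.domain : Set E))
    {x z : S.domain} (hx : S x = 0) (hz : S z = 0) (y : S†.domain)
    (h : (x : E) + S† y = z) : S† y = 0 := by
  have hy : (S† y : E) = z - x := eq_sub_of_add_eq' h
  refine (inner_self_eq_zero (𝕜 := 𝕜)).mp ?_
  calc ⟪S† y, S† y⟫_𝕜 = ⟪S† y, (z : E)⟫_𝕜 - ⟪S† y, (x : E)⟫_𝕜 := by
        rw [← inner_sub_right, ← hy]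
    _ = 0 := by
        rw [inner_adjoint_apply_eq_zero_of_apply_eq_zero hS y hz,
          inner_adjoint_apply_eq_zero_of_apply_eq_zero hS y hx, sub_zero]

end LinearPMap

theorem stmt7_general
    {H₁ H₂ H₃ : Type*}
    [NormedAddCommGroup H₁] [InnerProductSpace ℂ H₁] [CompleteSpace H₁]
    [NormedAddCommGroup H₂] [InnerProductSpace ℂ H₂] [CompleteSpace H₂]
    [NormedAddCommGroup H₃] [InnerProductSpace ℂ H₃]
    (T : H₁ →ₗ.[ℂ] H₂) (S : H₂ →ₗ.[ℂ] H₃)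
    (hSd : Dense (S.domain : Set H₂))
    (hST : ∀ x (hx : x ∈ T.domain), ∃ h : T ⟨x, hx⟩ ∈ S.domain,
      S ⟨T ⟨x, hx⟩, h⟩ = 0)
    (Ker : Submodule ℂ H₂)
    (G : H₂ →L[ℂ] H₂)
    (hGreen : ∀ φ : H₂, (∀ ψ ∈ Ker, ⟪φ, ψ⟫_ℂ = 0) →
      ∃ (h1 : G φ ∈ T.adjoint.domain) (h2 : T.adjoint ⟨G φ, h1⟩ ∈ T.domain)
        (h3 : G φ ∈ S.domain) (h4 : S ⟨G φ, h3⟩ ∈ S.adjoint.domain),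
        T ⟨T.adjoint ⟨G φ, h1⟩, h2⟩ + S.adjoint ⟨S ⟨G φ, h3⟩, h4⟩ = φ) :
    ∀ φ (hφS : φ ∈ S.domain), S ⟨φ, hφS⟩ = 0 → (∀ ψ ∈ Ker, ⟪φ, ψ⟫_ℂ = 0) →
      ∀ (h1 : G φ ∈ T.adjoint.domain) (h2 : T.adjoint ⟨G φ, h1⟩ ∈ T.domain)
        (h3 : G φ ∈ S.domain) (h4 : S ⟨G φ, h3⟩ ∈ S.adjoint.domain),
        S.adjoint ⟨S ⟨G φ, h3⟩, h4⟩ = 0 ∧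
        T ⟨T.adjoint ⟨G φ, h1⟩, h2⟩ = φ := by
  intro φ hφS hSφ hφK h1 h2 h3 h4
  obtain ⟨_, _, _, _, hsum⟩ := hGreen φ hφK
  obtain ⟨hTS, hSTφ⟩ := hST _ h2
  have hS_zero : S.adjoint ⟨S ⟨G φ, h3⟩, h4⟩ = 0 :=
    LinearPMap.adjoint_apply_eq_zero_of_add_eq hSd (x := ⟨_, hTS⟩) (z := ⟨φ, hφS⟩)
      hSTφ hSφ _ hsum
  exact ⟨hS_zero, by rwa [hS_zero, add_zero] at hsum⟩

/-- **Canonical solution operator via the Green operator.**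
Let `T : H₁ → H₂`, `S : H₂ → H₃` be closed densely defined operators with
`S ∘ T = 0`, both with closed range, let `□ = T T* + S* S` have
finite-dimensional kernel `Ker = ker S ∩ ker T*` and Green operator `G`
(so `□ G φ = φ` for `φ ⊥ Ker`, and `G = 0` on `Ker`).  If `S φ = 0` and
`φ ⊥ Ker`, then `S* S G φ = 0` and `u = T* G φ` solves `T u = φ`, i.e.
`φ = T T* G φ`. -/
theorem stmt7
    {H₁ H₂ H₃ : Type*}
    [NormedAddCommGroup H₁] [InnerProductSpace ℂ H₁] [CompleteSpace H₁]
    [NormedAddCommGroup H₂] [InnerProductSpace ℂ H₂] [CompleteSpace H₂]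
    [NormedAddCommGroup H₃] [InnerProductSpace ℂ H₃] [CompleteSpace H₃]
    (T : H₁ →ₗ.[ℂ] H₂) (S : H₂ →ₗ.[ℂ] H₃)
    (hTc : T.IsClosed) (hSc : S.IsClosed)
    (hTd : Dense (T.domain : Set H₁)) (hSd : Dense (S.domain : Set H₂))
    (hST : ∀ x (hx : x ∈ T.domain), ∃ h : T ⟨x, hx⟩ ∈ S.domain,
      S ⟨T ⟨x, hx⟩, h⟩ = 0)
    (hTr : IsClosed (Set.range fun x : T.domain => T x))
    (hSr : IsClosed (Set.range fun x : S.domain => S x))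
    (Ker : Submodule ℂ H₂)
    (hKer : (Ker : Set H₂) =
      {ψ | ∃ (hs : ψ ∈ S.domain) (ht : ψ ∈ T.adjoint.domain),
        S ⟨ψ, hs⟩ = 0 ∧ T.adjoint ⟨ψ, ht⟩ = 0})
    (hfin : FiniteDimensional ℂ Ker)
    (G : H₂ →L[ℂ] H₂)
    (hG0 : ∀ ψ ∈ Ker, G ψ = 0)
    (hGreen : ∀ φ : H₂, (∀ ψ ∈ Ker, ⟪φ, ψ⟫_ℂ = 0) →
      ∃ (h1 : G φ ∈ T.adjoint.domain) (h2 : T.adjoint ⟨G φ, h1⟩ ∈ T.domain)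
        (h3 : G φ ∈ S.domain) (h4 : S ⟨G φ, h3⟩ ∈ S.adjoint.domain),
        T ⟨T.adjoint ⟨G φ, h1⟩, h2⟩ + S.adjoint ⟨S ⟨G φ, h3⟩, h4⟩ = φ) :
    ∀ φ (hφS : φ ∈ S.domain), S ⟨φ, hφS⟩ = 0 → (∀ ψ ∈ Ker, ⟪φ, ψ⟫_ℂ = 0) →
      ∀ (h1 : G φ ∈ T.adjoint.domain) (h2 : T.adjoint ⟨G φ, h1⟩ ∈ T.domain)
        (h3 : G φ ∈ S.domain) (h4 : S ⟨G φ, h3⟩ ∈ S.adjoint.domain),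
        S.adjoint ⟨S ⟨G φ, h3⟩, h4⟩ = 0 ∧
        T ⟨T.adjoint ⟨G φ, h1⟩, h2⟩ = φ :=
  stmt7_general T S hSd hST Ker G hGreen
end

section
/- Suppose for each k ∈ ℕ there exists u_k in the Sobolev-type space H^k with T u_k = α, and suppose for all s > k, H^s ∩ ker T is dense in H^k ∩ ker T. Then there exists u ∈ ⋂_k H^k with T u = α. -/
/-!
A solution `u ∈ H^k` and a solution `v ∈ H^{k+1}` differ by an element of `H^k ∩ ker T`, which
density approximates within `2^{-k}` in `‖·‖_k` by an element of `H^{k+1} ∩ ker T`; correcting `v`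
by it gives a solution in `H^{k+1}` that is `2^{-k}`-close to `u`. Iterating from a solution in
`H^0`, and since the norms increase with `k`, the tail of the resulting sequence from index `k` is
Cauchy in `H^k`, so it has a limit in `H^k`. These limits all agree because `‖·‖_0` separates
points, and the common limit solves `T u = α` by continuity of `T` on `H^0`.
-/

open Filter Topology

namespace AddGroupSeminorm

variable {V : Type*} [AddCommGroup V]

theorem cauchy_of_le_geometric_two (p : AddGroupSeminorm V) {u : ℕ → V}
    (hu : ∀ n, p (u (n + 1) - u n) ≤ (1 / 2) ^ n) :
    ∀ ε > 0, ∃ N, ∀ m ≥ N, ∀ n ≥ N, p (u m - u n) < ε := by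
  let := p.toSeminormedAddCommGroup
  have hcauchy : CauchySeq u := cauchySeq_of_le_geometric_two (C := 2) fun n => by
    rw [dist_comm, dist_eq_norm, div_self two_ne_zero, ← one_div_pow]
    exact hu n
  simp_rw [Metric.cauchySeq_iff, dist_eq_norm] at hcauchy
  exact hcauchy

theorem tendsto_of_forall_lt (p : AddGroupSeminorm V) {u : ℕ → V} {x : V}
    (h : ∀ ε > 0, ∃ N, ∀ n ≥ N, p (u n - x) < ε) :
    Tendsto (fun n => p (u n - x)) atTop (𝓝 0) :=
  tendsto_order.2 ⟨fun _ hε => Eventually.of_forall fun _ => hε.trans_le (apply_nonneg p _),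
    fun ε hε => eventually_atTop.2 (h ε hε)⟩

theorem eq_zero_of_tendsto (p : AddGroupSeminorm V) {u : ℕ → V} {x y : V}
    (hx : Tendsto (fun n => p (u n - x)) atTop (𝓝 0))
    (hy : Tendsto (fun n => p (u n - y)) atTop (𝓝 0)) :
    p (x - y) = 0 := by
  have hle : p (x - y) ≤ 0 := by
    refine ge_of_tendsto' (by simpa using hx.add hy) fun n => ?_
    rw [map_sub_rev p (u n) x]
    exact le_map_sub_add_map_sub p x (u n) y
  exact hle.antisymm (apply_nonneg p _)

end AddGroupSeminorm

section Telescoping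

variable {R V W : Type*} [Ring R] [AddCommGroup V] [Module R V] [AddCommGroup W] [Module R W]
  {T : V →ₗ[R] W} {α : W}

theorem exists_solution_sub_lt_of_dense {E F : Submodule R V} (hEF : E ≤ F)
    {p : AddGroupSeminorm V}
    (hdense : ∀ x ∈ F, T x = 0 → ∀ ε > 0, ∃ y ∈ E, T y = 0 ∧ p (x - y) < ε)
    (hsol : ∃ v ∈ E, T v = α) {u : V} (hu : u ∈ F) (hTu : T u = α) {ε : ℝ} (hε : 0 < ε) :
    ∃ u' ∈ E, T u' = α ∧ p (u' - u) < ε := by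
  obtain ⟨v, hv, hTv⟩ := hsol
  obtain ⟨y, hy, hTy, hlt⟩ :=
    hdense (u - v) (F.sub_mem hu (hEF hv)) (by rw [map_sub, hTu, hTv, sub_self]) ε hε
  refine ⟨v + y, E.add_mem hv hy, by rw [map_add, hTv, hTy, add_zero], ?_⟩
  rwa [← map_neg_eq_map, neg_sub, sub_add_eq_sub_sub]

theorem exists_seq_solution_sub_lt {H : ℕ → Submodule R V} (hdec : ∀ k, H (k + 1) ≤ H k)
    {p : ℕ → AddGroupSeminorm V}
    (hdense : ∀ k, ∀ x ∈ H k, T x = 0 → ∀ ε > 0, ∃ y ∈ H (k + 1), T y = 0 ∧ p k (x - y) < ε)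
    (hsol : ∀ k, ∃ u ∈ H k, T u = α) :
    ∃ u : ℕ → V, (∀ k, u k ∈ H k) ∧ (∀ k, T (u k) = α) ∧
      ∀ k, p k (u (k + 1) - u k) < (1 / 2) ^ k := by
  have step : ∀ k u, u ∈ H k ∧ T u = α →
      ∃ u', (u' ∈ H (k + 1) ∧ T u' = α) ∧ p k (u' - u) < (1 / 2) ^ k := by
    rintro k u ⟨hu, hTu⟩
    obtain ⟨u', hu', hTu', hlt⟩ := exists_solution_sub_lt_of_dense (hdec k) (hdense k)
      (hsol (k + 1)) hu hTu (pow_pos one_half_pos k)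
    exact ⟨u', ⟨hu', hTu'⟩, hlt⟩
  choose! next hnext using step
  obtain ⟨u₀, hu₀⟩ := hsol 0
  let u : ℕ → V := fun k => Nat.rec u₀ next k
  have hu : ∀ k, u k ∈ H k ∧ T (u k) = α := fun k =>
    Nat.rec hu₀ (fun k ih => (hnext k (u k) ih).1) k
  exact ⟨u, fun k => (hu k).1, fun k => (hu k).2, fun k => (hnext k (u k) (hu k)).2⟩

theorem exists_mem_tendsto_of_complete {H : ℕ → Submodule R V} (hH : Antitone H)
    {p : ℕ → AddGroupSeminorm V} (hp : Monotone p) (k : ℕ)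
    (hcomplete : ∀ u : ℕ → V, (∀ n, u n ∈ H k) →
      (∀ ε > 0, ∃ N, ∀ m ≥ N, ∀ n ≥ N, p k (u m - u n) < ε) →
      ∃ x ∈ H k, ∀ ε > 0, ∃ N, ∀ n ≥ N, p k (u n - x) < ε)
    {u : ℕ → V} (hu : ∀ n, u n ∈ H n) (hstep : ∀ n, p n (u (n + 1) - u n) < (1 / 2) ^ n) :
    ∃ x ∈ H k, Tendsto (fun n => p k (u n - x)) atTop (𝓝 0) := by
  have htail_step : ∀ n, p k (u (n + 1 + k) - u (n + k)) ≤ (1 / 2) ^ n := fun n =>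
    calc p k (u (n + 1 + k) - u (n + k))
        ≤ p (n + k) (u (n + 1 + k) - u (n + k)) := hp (Nat.le_add_left k n) _
      _ ≤ (1 / 2) ^ (n + k) := by rw [Nat.add_right_comm]; exact (hstep (n + k)).le
      _ ≤ (1 / 2) ^ n := pow_le_pow_of_le_one (by norm_num) (by norm_num) (Nat.le_add_right n k)
  obtain ⟨x, hx, hlim⟩ := hcomplete (fun n => u (n + k))
    (fun n => hH (Nat.le_add_left k n) (hu (n + k)))
    ((p k).cauchy_of_le_geometric_two htail_step)
  exact ⟨x, hx, (tendsto_add_atTop_iff_nat k).1 ((p k).tendsto_of_forall_lt hlim)⟩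

theorem map_eq_of_tendsto {E : Submodule R V} {p : AddGroupSeminorm V} {nW : W → ℝ}
    (hsepW : ∀ w : W, (∀ ε > 0, nW w < ε) → w = 0) (hT : ∃ C : ℝ, ∀ x ∈ E, nW (T x) ≤ C * p x)
    {u : ℕ → V} (hu : ∀ n, u n ∈ E) (hTu : ∀ n, T (u n) = α) {x : V} (hx : x ∈ E)
    (hlim : Tendsto (fun n => p (u n - x)) atTop (𝓝 0)) :
    T x = α := by
  obtain ⟨C, hC⟩ := hT
  have hle : nW (T x - α) ≤ 0 := by
    refine ge_of_tendsto' (by simpa using hlim.const_mul C) fun n => ?_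
    rw [← hTu n, ← map_sub, map_sub_rev p]
    exact hC _ (E.sub_mem hx (hu n))
  exact sub_eq_zero.1 (hsepW _ fun ε hε => hle.trans_lt hε)

end Telescoping

theorem stmt12_general
    {V W : Type*} [AddCommGroup V] [Module ℂ V] [AddCommGroup W] [Module ℂ W]
    (Hk : ℕ → Submodule ℂ V) (hdec : ∀ k, Hk (k + 1) ≤ Hk k)
    (nk : ℕ → V → ℝ) (nW : W → ℝ)
    (hn0 : ∀ k, nk k 0 = 0)
    (hnadd : ∀ k x y, nk k (x + y) ≤ nk k x + nk k y)
    (hnneg : ∀ k x, nk k (-x) = nk k x)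
    (hmono : ∀ k x, nk k x ≤ nk (k + 1) x)
    (hsepV : ∀ x : V, (∀ ε > 0, nk 0 x < ε) → x = 0)
    (hsepW : ∀ w : W, (∀ ε > 0, nW w < ε) → w = 0)
    (hcomplete : ∀ k (u : ℕ → V), (∀ n, u n ∈ Hk k) →
      (∀ ε > 0, ∃ N, ∀ m ≥ N, ∀ n ≥ N, nk k (u m - u n) < ε) →
      ∃ x ∈ Hk k, ∀ ε > 0, ∃ N, ∀ n ≥ N, nk k (u n - x) < ε)
    (T : V →ₗ[ℂ] W)
    (hTcont : ∀ k, ∃ Ck : ℝ, ∀ x ∈ Hk k, nW (T x) ≤ Ck * nk k x)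
    (α : W)
    (hsol : ∀ k, ∃ u ∈ Hk k, T u = α)
    (hdense : ∀ k s, k ≤ s → ∀ x ∈ Hk k, T x = 0 →
      ∀ ε > 0, ∃ y ∈ Hk s, T y = 0 ∧ nk k (x - y) < ε) :
    ∃ u : V, (∀ k, u ∈ Hk k) ∧ T u = α := by
  let p : ℕ → AddGroupSeminorm V := fun k => ⟨nk k, hn0 k, hnadd k, hnneg k⟩
  have hp : Monotone p := monotone_nat_of_le_succ fun k x => hmono k x
  have hH : Antitone Hk := antitone_nat_of_succ_le hdec
  obtain ⟨u, hu, hTu, hstep⟩ := exists_seq_solution_sub_lt (p := p) hdec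
    (fun k => hdense k (k + 1) k.le_succ) hsol
  choose x hx hlim using fun k =>
    exists_mem_tendsto_of_complete hH hp k (hcomplete k) hu hstep
  have hx_eq : ∀ k, x k = x 0 := fun k => sub_eq_zero.1 <| hsepV _ fun ε hε => by
    have hlim₀ : Tendsto (fun n => p 0 (u n - x k)) atTop (𝓝 0) :=
      squeeze_zero (fun _ => apply_nonneg _ _) (fun _ => hp (Nat.zero_le k) _) (hlim k)
    exact ((p 0).eq_zero_of_tendsto hlim₀ (hlim 0)).trans_lt hε
  refine ⟨x 0, fun k => hx_eq k ▸ hx k, ?_⟩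
  exact map_eq_of_tendsto hsepW (hTcont 0) (fun n => hH (Nat.zero_le n) (hu n)) hTu (hx 0)
    (hlim 0)

/-- **Exact regularity via a Mittag-Leffler/telescoping argument.**
Let `(H^k)` be a decreasing family of complete subspaces of a vector space
`V`, with norms `n_k` increasing in `k`, let `T` be a linear map continuous
on each `H^k` (with values in a normed target `W`), and let `α ∈ W`.
Suppose that for every `k` there is `u_k ∈ H^k` with `T u_k = α`, and that
for all `s ≥ k` the space `H^s ∩ ker T` is dense in `H^k ∩ ker T` for the
norm `n_k`.  Then there exists `u ∈ ⋂_k H^k` with `T u = α`. -/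
theorem stmt12
    {V W : Type*} [AddCommGroup V] [Module ℂ V] [AddCommGroup W] [Module ℂ W]
    (Hk : ℕ → Submodule ℂ V) (hdec : ∀ k, Hk (k + 1) ≤ Hk k)
    (nk : ℕ → V → ℝ) (nW : W → ℝ)
    (hn0 : ∀ k, nk k 0 = 0)
    (hnonneg : ∀ k x, 0 ≤ nk k x)
    (hnadd : ∀ k x y, nk k (x + y) ≤ nk k x + nk k y)
    (hnneg : ∀ k x, nk k (-x) = nk k x)
    (hmono : ∀ k x, nk k x ≤ nk (k + 1) x)
    (hsepV : ∀ x : V, (∀ ε > 0, nk 0 x < ε) → x = 0)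
    (hWnonneg : ∀ w, 0 ≤ nW w)
    (hWadd : ∀ w w', nW (w + w') ≤ nW w + nW w')
    (hWneg : ∀ w, nW (-w) = nW w)
    (hsepW : ∀ w : W, (∀ ε > 0, nW w < ε) → w = 0)
    (hcomplete : ∀ k (u : ℕ → V), (∀ n, u n ∈ Hk k) →
      (∀ ε > 0, ∃ N, ∀ m ≥ N, ∀ n ≥ N, nk k (u m - u n) < ε) →
      ∃ x ∈ Hk k, ∀ ε > 0, ∃ N, ∀ n ≥ N, nk k (u n - x) < ε)
    (T : V →ₗ[ℂ] W)
    (hTcont : ∀ k, ∃ Ck : ℝ, ∀ x ∈ Hk k, nW (T x) ≤ Ck * nk k x)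
    (α : W)
    (hsol : ∀ k, ∃ u ∈ Hk k, T u = α)
    (hdense : ∀ k s, k ≤ s → ∀ x ∈ Hk k, T x = 0 →
      ∀ ε > 0, ∃ y ∈ Hk s, T y = 0 ∧ nk k (x - y) < ε) :
    ∃ u : V, (∀ k, u ∈ Hk k) ∧ T u = α :=
  stmt12_general Hk hdec nk nW hn0 hnadd hnneg hmono hsepV hsepW hcomplete T hTcont α hsol hdense
end
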